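/- Let L be a levellised n-poset with dep(n−1) = k, m ≥ 1, and A_n,…,A_{n+m−1} ⊆ L \ {0}. The poset L̃ obtained by adding m new atoms n,…,n+m−1 with covering sets A_n,…,A_{n+m−1} is levellised with dep_{L̃}(a) = dep_L(a) ≤ k for 1 ≤ a < n and dep_{L̃}(i) = k+1 for all new elements i, if and only if every A_i meets the k-th level of L. -/

import Mathlib

/-!
Let `C(a)` be the set of lengths of strict chains from the top `t` down to `a`, so that
`dep a = sup C(a)`. Cutting off the last step of a chain gives
`d + 1 ∈ C(a) ↔ ∃ b > a, d ∈ C(b)`. In the extension, only old elements lie above a nonzero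
old element, so old depths do not change, while the elements strictly above a new atom `i` are
exactly those of `upset (A i)`; as depth is antitone, `dep i = 1 + max {dep a | a ∈ A i}`.
Levellisedness of `L` and `dep (n - 1) = k` bound every old nonzero depth by `k`, so
`dep i = k + 1` iff `A i` meets level `k`. The new atoms carry the largest labels and then the
largest depth, so `L̃` stays levellised.
-/

namespace PaperLattice

variable {N : ℕ}

/-- Depth: one less than the maximum length of a chain from `t` down to `a` w.r.t. `le`. -/
noncomputable def dep (le : Fin N → Fin N → Prop) (t a : Fin N) : ℕ :=
  sSup {k | ∃ l : List (Fin N), List.Chain' (fun x y => le y x ∧ y ≠ x) l ∧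
    l.head? = some t ∧ l.getLast? = some a ∧ l.length = k + 1}

/-- The `d`-th level: elements of depth `d`. -/
noncomputable def lev (le : Fin N → Fin N → Prop) (t : Fin N) (d : ℕ) : Set (Fin N) :=
  {a | dep le t a = d}

/-- A labelled poset is levellised if depth is monotone in the nonzero labels. -/
def Levellised (le : Fin N → Fin N → Prop) (t : Fin N) : Prop :=
  ∀ i j : Fin N, 0 < (i : ℕ) → (i : ℕ) ≤ (j : ℕ) → dep le t i ≤ dep le t j

def lt' (le : Fin N → Fin N → Prop) (a b : Fin N) : Prop := le a b ∧ a ≠ b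

/-- `b` covers `a`. -/
def CovByRel (le : Fin N → Fin N → Prop) (a b : Fin N) : Prop :=
  lt' le a b ∧ ∀ x, lt' le a x → lt' le x b → False

/-- The covering set of `a`. -/
def cov (le : Fin N → Fin N → Prop) (a : Fin N) : Set (Fin N) := {b | CovByRel le a b}

/-- The up-set of `A`. -/
def upset (le : Fin N → Fin N → Prop) (A : Set (Fin N)) : Set (Fin N) :=
  {x | ∃ a ∈ A, le a x}

def AntichainRel (le : Fin N → Fin N → Prop) (A : Set (Fin N)) : Prop :=
  ∀ a ∈ A, ∀ b ∈ A, a ≠ b → ¬ le a b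

/-- Binary weight of a set of labels. -/
noncomputable def wt (A : Set (Fin N)) : ℕ :=
  ∑ j : Fin N, A.indicator (fun j => 2 ^ (j : ℕ)) j

/-- `z` is a bottom and `o` a top for `le`. -/
def Bounds (le : Fin N → Fin N → Prop) (z o : Fin N) : Prop :=
  (∀ a, le z a) ∧ (∀ a, le a o)

/-- The order obtained from `le` by adding `m` new atoms, the `i`-th having covering set `A i`. -/
def extLe {n m : ℕ} (le : Fin n → Fin n → Prop) (A : Fin m → Set (Fin n)) :
    Fin (n + m) → Fin (n + m) → Prop := fun x y =>
  if hx : (x : ℕ) < n then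
    if hy : (y : ℕ) < n then le ⟨x, hx⟩ ⟨y, hy⟩
    else (x : ℕ) = 0
  else
    if hy : (y : ℕ) < n then
      (⟨y, hy⟩ : Fin n) ∈ upset le (A ⟨(x : ℕ) - n, by have := x.isLt; omega⟩)
    else x = y

/-- The relabelled order `π(L)`. -/
def permLe {n : ℕ} (π : Equiv.Perm (Fin n)) (le : Fin n → Fin n → Prop) :
    Fin n → Fin n → Prop := fun a b => le (π.symm a) (π.symm b)

section Chains

variable {le : Fin N → Fin N → Prop} {t a b : Fin N} {d : ℕ}

def chainLengths (le : Fin N → Fin N → Prop) (t a : Fin N) : Set ℕ :=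
  {k | ∃ l : List (Fin N), l.IsChain (fun x y => le y x ∧ y ≠ x) ∧
    l.head? = some t ∧ l.getLast? = some a ∧ l.length = k + 1}

theorem dep_eq_sSup_chainLengths (le : Fin N → Fin N → Prop) (t a : Fin N) :
    dep le t a = sSup (chainLengths le t a) := rfl

theorem zero_mem_chainLengths_iff : 0 ∈ chainLengths le t a ↔ a = t := by
  constructor
  · rintro ⟨l, -, hhead, hlast, hlen⟩
    obtain ⟨x, rfl⟩ := List.length_eq_one_iff.1 hlen
    simp only [List.head?_cons, List.getLast?_singleton, Option.some.injEq] at hhead hlast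
    rw [← hlast, hhead]
  · rintro rfl
    exact ⟨[a], List.isChain_singleton a, rfl, rfl, rfl⟩

theorem succ_mem_chainLengths_iff :
    d + 1 ∈ chainLengths le t a ↔ ∃ b, lt' le a b ∧ d ∈ chainLengths le t b := by
  constructor
  · rintro ⟨l, hchain, hhead, hlast, hlen⟩
    rcases l.eq_nil_or_concat with rfl | ⟨l, c, rfl⟩
    · simp at hlen
    simp only [List.concat_eq_append] at hchain hhead hlast hlen
    have hl : l ≠ [] := by rintro rfl; simp at hlen
    obtain rfl : c = a := by simpa using hlast
    obtain ⟨hchain, -, hlink⟩ := List.isChain_append.1 hchain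
    refine ⟨l.getLast hl, hlink _ (List.getLast?_eq_some_getLast hl) _ rfl,
      l, hchain, ?_, List.getLast?_eq_some_getLast hl, by simpa using hlen⟩
    rwa [List.head?_append_of_ne_nil _ hl] at hhead
  · rintro ⟨b, hab, l, hchain, hhead, hlast, hlen⟩
    have hl : l ≠ [] := by rintro rfl; simp at hlen
    refine ⟨l ++ [a], hchain.append (List.isChain_singleton a) ?_, ?_, by simp, by simp [hlen]⟩
    · simp only [hlast, Option.mem_def, Option.some.injEq, List.head?_cons, forall_eq']
      exact hab
    · rwa [List.head?_append_of_ne_nil _ hl]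

variable [IsPartialOrder (Fin N) le]

theorem bddAbove_chainLengths (t a : Fin N) : BddAbove (chainLengths le t a) := by
  refine ⟨N, ?_⟩
  rintro d ⟨l, hchain, -, -, hlen⟩
  have : IsTrans (Fin N) (fun x y => le y x ∧ y ≠ x) :=
    ⟨fun x y z hxy hyz => ⟨_root_.trans hyz.1 hxy.1, fun hzx => hxy.2 (by
      subst hzx; exact antisymm hxy.1 hyz.1)⟩⟩
  have hnodup : l.Nodup := (List.isChain_iff_pairwise.1 hchain).imp fun h => h.2.symm
  have hlt : d < N := by simpa [hlen] using hnodup.length_le_card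
  exact hlt.le

theorem le_dep_of_mem_chainLengths (h : d ∈ chainLengths le t a) : d ≤ dep le t a :=
  le_csSup (bddAbove_chainLengths t a) h

theorem dep_mem_chainLengths (hat : le a t) : dep le t a ∈ chainLengths le t a := by
  refine Nat.sSup_mem ?_ (bddAbove_chainLengths t a)
  by_cases h : a = t
  · exact ⟨0, zero_mem_chainLengths_iff.2 h⟩
  · exact ⟨1, succ_mem_chainLengths_iff.2 ⟨t, ⟨hat, h⟩, zero_mem_chainLengths_iff.2 rfl⟩⟩

theorem dep_anti (hab : le a b) : dep le t b ≤ dep le t a := by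
  refine csSup_le' fun d hd => ?_
  by_cases h : a = b
  · subst h
    exact le_dep_of_mem_chainLengths hd
  · exact (d.le_succ).trans
      (le_dep_of_mem_chainLengths (succ_mem_chainLengths_iff.2 ⟨b, ⟨hab, h⟩, hd⟩))

end Chains

section Extension

variable {n m : ℕ} {le : Fin n → Fin n → Prop} {A : Fin m → Set (Fin n)}

@[simp]
theorem extLe_castAdd_castAdd (a b : Fin n) :
    extLe le A (Fin.castAdd m a) (Fin.castAdd m b) ↔ le a b := by
  simp [extLe]

@[simp]
theorem extLe_castAdd_natAdd (a : Fin n) (i : Fin m) :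
    extLe le A (Fin.castAdd m a) (Fin.natAdd n i) ↔ (a : ℕ) = 0 := by
  simp [extLe]

@[simp]
theorem extLe_natAdd_castAdd (i : Fin m) (b : Fin n) :
    extLe le A (Fin.natAdd n i) (Fin.castAdd m b) ↔ b ∈ upset le (A i) := by
  simp [extLe]

@[simp]
theorem extLe_natAdd_natAdd (i j : Fin m) :
    extLe le A (Fin.natAdd n i) (Fin.natAdd n j) ↔ i = j := by
  simp [extLe]

variable [IsPartialOrder (Fin n) le] {h0 : 0 < n} {t a b : Fin n} {i : Fin m} {d k : ℕ}

theorem val_ne_zero_of_le (hbot : ∀ a, le ⟨0, h0⟩ a) (hab : le a b) (ha : (a : ℕ) ≠ 0) :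
    (b : ℕ) ≠ 0 := by
  intro hb
  obtain rfl : b = ⟨0, h0⟩ := Fin.ext hb
  exact ha (congrArg Fin.val (antisymm hab (hbot a)))

/-- Only old elements lie above a nonzero old element, so its chains avoid the new atoms. -/
theorem chainLengths_extLe_castAdd (hbot : ∀ a, le ⟨0, h0⟩ a) (ha : (a : ℕ) ≠ 0) :
    chainLengths (extLe le A) (Fin.castAdd m t) (Fin.castAdd m a) = chainLengths le t a := by
  ext d
  induction d generalizing a with
  | zero => simp [zero_mem_chainLengths_iff]
  | succ d ih =>
    simp only [succ_mem_chainLengths_iff]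
    constructor
    · rintro ⟨x, hax, hd⟩
      induction x using Fin.addCases with
      | left b =>
        have hab : le a b := by simpa using hax.1
        exact ⟨b, ⟨hab, by simpa using hax.2⟩, (ih (val_ne_zero_of_le hbot hab ha)).1 hd⟩
      | right j => exact absurd (by simpa using hax.1) ha
    · rintro ⟨b, hab, hd⟩
      exact ⟨Fin.castAdd m b, ⟨by simpa using hab.1, by simpa using hab.2⟩,
        (ih (val_ne_zero_of_le hbot hab.1 ha)).2 hd⟩

theorem dep_extLe_castAdd (hbot : ∀ a, le ⟨0, h0⟩ a) (ha : (a : ℕ) ≠ 0) :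
    dep (extLe le A) (Fin.castAdd m t) (Fin.castAdd m a) = dep le t a := by
  rw [dep_eq_sSup_chainLengths, dep_eq_sSup_chainLengths, chainLengths_extLe_castAdd hbot ha]

theorem succ_mem_chainLengths_extLe_natAdd_iff (hbot : ∀ a, le ⟨0, h0⟩ a)
    (hA : ∀ a ∈ A i, (a : ℕ) ≠ 0) :
    d + 1 ∈ chainLengths (extLe le A) (Fin.castAdd m t) (Fin.natAdd n i) ↔
      ∃ b ∈ upset le (A i), d ∈ chainLengths le t b := by
  rw [succ_mem_chainLengths_iff]
  constructor
  · rintro ⟨x, hix, hd⟩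
    induction x using Fin.addCases with
    | left b =>
      obtain ⟨a, haA, hab⟩ : b ∈ upset le (A i) := by simpa using hix.1
      rw [chainLengths_extLe_castAdd hbot (val_ne_zero_of_le hbot hab (hA a haA))] at hd
      exact ⟨b, ⟨a, haA, hab⟩, hd⟩
    | right j => exact absurd (by simpa using hix.1) hix.2
  · rintro ⟨b, ⟨a, haA, hab⟩, hd⟩
    have hib : Fin.natAdd n i ≠ Fin.castAdd m b :=
      Fin.ne_of_val_ne (by simp only [Fin.val_natAdd, Fin.val_castAdd]; omega)
    refine ⟨Fin.castAdd m b, ⟨by simpa using ⟨a, haA, hab⟩, hib⟩, ?_⟩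
    rwa [chainLengths_extLe_castAdd hbot (val_ne_zero_of_le hbot hab (hA a haA))]

theorem dep_extLe_natAdd_eq_succ_iff (hb : Bounds le ⟨0, h0⟩ t)
    (hk : ∀ a : Fin n, (a : ℕ) ≠ 0 → dep le t a ≤ k) (hA : ∀ a ∈ A i, (a : ℕ) ≠ 0) :
    dep (extLe le A) (Fin.castAdd m t) (Fin.natAdd n i) = k + 1 ↔
      (A i ∩ lev le t k).Nonempty := by
  have hupper : ∀ d ∈ chainLengths (extLe le A) (Fin.castAdd m t) (Fin.natAdd n i),
      d ≤ k + 1 := by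
    rintro (_ | d) hd
    · exact (k + 1).zero_le
    · obtain ⟨b, ⟨a, haA, hab⟩, hd⟩ := (succ_mem_chainLengths_extLe_natAdd_iff hb.1 hA).1 hd
      have := (le_dep_of_mem_chainLengths hd).trans
        (hk b (val_ne_zero_of_le hb.1 hab (hA a haA)))
      omega
  have hbdd := (⟨k + 1, hupper⟩ : BddAbove _)
  constructor
  · intro hdep
    have hne : (chainLengths (extLe le A) (Fin.castAdd m t) (Fin.natAdd n i)).Nonempty :=
      Set.nonempty_iff_ne_empty.2 fun he => by simp [dep_eq_sSup_chainLengths, he] at hdep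
    have hmem := Nat.sSup_mem hne hbdd
    rw [← dep_eq_sSup_chainLengths, hdep, succ_mem_chainLengths_extLe_natAdd_iff hb.1 hA] at hmem
    obtain ⟨b, ⟨a, haA, hab⟩, hd⟩ := hmem
    refine ⟨a, haA, le_antisymm (hk a (hA a haA)) ?_⟩
    calc k ≤ dep le t b := le_dep_of_mem_chainLengths hd
      _ ≤ dep le t a := dep_anti hab
  · rintro ⟨a, haA, hak : dep le t a = k⟩
    have hmem : k + 1 ∈ chainLengths (extLe le A) (Fin.castAdd m t) (Fin.natAdd n i) :=
      (succ_mem_chainLengths_extLe_natAdd_iff hb.1 hA).2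
        ⟨a, ⟨a, haA, refl a⟩, hak ▸ dep_mem_chainLengths (hb.2 a)⟩
    exact le_antisymm (csSup_le' hupper) (le_csSup hbdd hmem)

end Extension

theorem levellised_of_castAdd_of_natAdd {n m : ℕ} {le : Fin n → Fin n → Prop} {t : Fin n}
    {le' : Fin (n + m) → Fin (n + m) → Prop} {t' : Fin (n + m)} {k : ℕ}
    (hlev : Levellised le t)
    (hold : ∀ a : Fin n, (a : ℕ) ≠ 0 → dep le' t' (Fin.castAdd m a) = dep le t a)
    (hk : ∀ a : Fin n, (a : ℕ) ≠ 0 → dep le t a ≤ k)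
    (hnew : ∀ i, dep le' t' (Fin.natAdd n i) = k + 1) :
    Levellised le' t' := by
  intro x y hx hxy
  induction y using Fin.addCases with
  | left b =>
    induction x using Fin.addCases with
    | left a =>
      simp only [Fin.val_castAdd] at hx hxy
      rw [hold a hx.ne', hold b (by omega)]
      exact hlev a b hx hxy
    | right i =>
      simp only [Fin.val_natAdd, Fin.val_castAdd] at hxy
      omega
  | right j =>
    rw [hnew]
    induction x using Fin.addCases with
    | left a =>
      rw [hold a (by simpa using hx.ne')]
      exact (hk a (by simpa using hx.ne')).trans k.le_succ
    | right i => rw [hnew]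

/-- the poset obtained by adding `m` new atoms with covering sets `A i` is
levellised with the stated depths iff every `A i` meets the `k`-th level. -/
theorem statement6 {n m : ℕ} (hn : 2 ≤ n)
    (le : Fin n → Fin n → Prop) (hpo : IsPartialOrder (Fin n) le)
    (hb : Bounds le ⟨0, by omega⟩ ⟨1, by omega⟩)
    (hlev : Levellised le ⟨1, by omega⟩)
    (k : ℕ) (hk : dep le ⟨1, by omega⟩ ⟨n - 1, by omega⟩ = k)
    (A : Fin m → Set (Fin n)) (hA0 : ∀ i, ∀ a ∈ A i, a ≠ ⟨0, by omega⟩) :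
    (Levellised (extLe le A) ⟨1, by omega⟩ ∧
      (∀ a : Fin n, 1 ≤ (a : ℕ) →
        dep (extLe le A) ⟨1, by omega⟩ (Fin.castAdd m a) = dep le ⟨1, by omega⟩ a ∧
        dep le ⟨1, by omega⟩ a ≤ k) ∧
      (∀ i : Fin m, dep (extLe le A) ⟨1, by omega⟩ (Fin.natAdd n i) = k + 1)) ↔
    ∀ i : Fin m, (A i ∩ lev le ⟨1, by omega⟩ k).Nonempty := by
  have hbound : ∀ a : Fin n, (a : ℕ) ≠ 0 → dep le ⟨1, by omega⟩ a ≤ k := fun a ha =>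
    hk ▸ hlev a ⟨n - 1, by omega⟩ (Nat.pos_of_ne_zero ha)
      (Nat.le_sub_one_of_lt a.isLt)
  have hold : ∀ a : Fin n, (a : ℕ) ≠ 0 →
      dep (extLe le A) ⟨1, by omega⟩ (Fin.castAdd m a) = dep le ⟨1, by omega⟩ a :=
    fun a ha => dep_extLe_castAdd (t := ⟨1, by omega⟩) hb.1 ha
  have hnew (i : Fin m) :=
    dep_extLe_natAdd_eq_succ_iff (A := A) hb hbound fun a ha h => hA0 i a ha (Fin.ext h)
  constructor
  · rintro ⟨-, -, hdep⟩ i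
    exact (hnew i).1 (hdep i)
  · intro hmeet
    have hdep i := (hnew i).2 (hmeet i)
    exact ⟨levellised_of_castAdd_of_natAdd hlev hold hbound hdep,
      fun a ha => ⟨hold a (by omega), hbound a (by omega)⟩, hdep⟩

end PaperLattice
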